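/- Let Σ be a linking graph for a (Λ,Γ) k-morph X, where Λ and Γ are row-finite k-graphs with no sources, s : X → Γ⁰ is surjective, and r : X → Λ⁰ is surjective and finite-to-one. Then Σ is a row-finite, locally convex (k+1)-graph. -/

import Mathlib

/-- A `k`-graph structure on a set `Obj` of vertices and a set `Path` of morphisms:
a countable small category together with a degree functor `d : Path → ℕ^k`
satisfying the unique factorisation property. Vertices are identified with
identity morphisms via `ident`.  Composition is a total function, constrained
only on composable pairs (`src p = rng q`). -/
structure KGraphStr (k : ℕ) (Obj : Type) (Path : Type) where
  src : Path → Obj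
  rng : Path → Obj
  ident : Obj → Path
  comp : Path → Path → Path
  d : Path → Fin k → ℕ
  countable : Countable Path
  nonemptyObj : Nonempty Obj
  src_ident : ∀ v, src (ident v) = v
  rng_ident : ∀ v, rng (ident v) = v
  d_ident : ∀ v, d (ident v) = 0
  src_comp : ∀ p q, src p = rng q → src (comp p q) = src q
  rng_comp : ∀ p q, src p = rng q → rng (comp p q) = rng p
  d_comp : ∀ p q, src p = rng q → d (comp p q) = d p + d q
  comp_ident : ∀ p, comp p (ident (src p)) = p
  ident_comp : ∀ p, comp (ident (rng p)) p = p
  comp_assoc : ∀ p q r, src p = rng q → src q = rng r →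
    comp (comp p q) r = comp p (comp q r)
  factor : ∀ p (m n : Fin k → ℕ), d p = m + n →
    ∃! μν : Path × Path, src μν.1 = rng μν.2 ∧ d μν.1 = m ∧ d μν.2 = n ∧
      comp μν.1 μν.2 = p

/-- A `(Λ,Γ)` `k`-morph: a countable set `X` with `r : X → Λ⁰`, `s : X → Γ⁰`
and a structure bijection `φ : X *_{Γ⁰} Γ → Λ *_{Λ⁰} X`, here encoded by its
two components `φl`, `φx` (constrained only on composable pairs) together
with the bijectivity condition `bij`. -/
structure KMorph {k : ℕ} {OΛ PΛ OΓ PΓ : Type}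
    (Λ : KGraphStr k OΛ PΛ) (Γ : KGraphStr k OΓ PΓ) (X : Type) where
  countable : Countable X
  r : X → OΛ
  s : X → OΓ
  φl : X → PΓ → PΛ
  φx : X → PΓ → X
  src_φl : ∀ x γ, s x = Γ.rng γ → Λ.src (φl x γ) = r (φx x γ)
  d_φl : ∀ x γ, s x = Γ.rng γ → Λ.d (φl x γ) = Γ.d γ
  s_φx : ∀ x γ, s x = Γ.rng γ → s (φx x γ) = Γ.src γ
  rng_φl : ∀ x γ, s x = Γ.rng γ → Λ.rng (φl x γ) = r x
  mult_φl : ∀ x γ₁ γ₂, s x = Γ.rng γ₁ → Γ.src γ₁ = Γ.rng γ₂ →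
      φl x (Γ.comp γ₁ γ₂) = Λ.comp (φl x γ₁) (φl (φx x γ₁) γ₂)
  mult_φx : ∀ x γ₁ γ₂, s x = Γ.rng γ₁ → Γ.src γ₁ = Γ.rng γ₂ →
      φx x (Γ.comp γ₁ γ₂) = φx (φx x γ₁) γ₂
  bij : ∀ lam x', Λ.src lam = r x' →
      ∃! p : X × PΓ, s p.1 = Γ.rng p.2 ∧ φl p.1 p.2 = lam ∧ φx p.1 p.2 = x'

/-- An isomorphism of `(Λ,Γ)` `k`-morphs: a bijection intertwining the
structure maps. -/
structure MorphIso {k : ℕ} {OΛ PΛ OΓ PΓ X Y : Type}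
    {Λ : KGraphStr k OΛ PΛ} {Γ : KGraphStr k OΓ PΓ}
    (M : KMorph Λ Γ X) (N : KMorph Λ Γ Y) where
  θ : X ≃ Y
  r_θ : ∀ x, N.r (θ x) = M.r x
  s_θ : ∀ x, N.s (θ x) = M.s x
  φl_θ : ∀ x γ, M.s x = Γ.rng γ → N.φl (θ x) γ = M.φl x γ
  φx_θ : ∀ x γ, M.s x = Γ.rng γ → N.φx (θ x) γ = θ (M.φx x γ)

/-- The underlying set `X₁ *_{Λ₁⁰} X₂` of the fibred product of two k-morphs. -/
def FibCarrier {k : ℕ} {O₀ P₀ O₁ P₁ O₂ P₂ X₁ X₂ : Type}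
    {Λ₀ : KGraphStr k O₀ P₀} {Λ₁ : KGraphStr k O₁ P₁} {Λ₂ : KGraphStr k O₂ P₂}
    (M₁ : KMorph Λ₀ Λ₁ X₁) (M₂ : KMorph Λ₁ Λ₂ X₂) : Type :=
  {p : X₁ × X₂ // M₁.s p.1 = M₂.r p.2}

/-- `P` is *the* fibred product k-morph of `M₁` and `M₂`:
`r(x₁,x₂) = r(x₁)`, `s(x₁,x₂) = s(x₂)`, and `φ` is obtained by passing a path
through `M₂` and then through `M₁`. -/
def IsFibProd {k : ℕ} {O₀ P₀ O₁ P₁ O₂ P₂ X₁ X₂ : Type}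
    {Λ₀ : KGraphStr k O₀ P₀} {Λ₁ : KGraphStr k O₁ P₁} {Λ₂ : KGraphStr k O₂ P₂}
    (M₁ : KMorph Λ₀ Λ₁ X₁) (M₂ : KMorph Λ₁ Λ₂ X₂)
    (P : KMorph Λ₀ Λ₂ (FibCarrier M₁ M₂)) : Prop :=
  (∀ p : FibCarrier M₁ M₂, P.r p = M₁.r p.1.1) ∧
  (∀ p : FibCarrier M₁ M₂, P.s p = M₂.s p.1.2) ∧
  (∀ (p : FibCarrier M₁ M₂) lam, P.s p = Λ₂.rng lam →
    P.φl p lam = M₁.φl p.1.1 (M₂.φl p.1.2 lam) ∧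
    (P.φx p lam).1.1 = M₁.φx p.1.1 (M₂.φl p.1.2 lam) ∧
    (P.φx p lam).1.2 = M₂.φx p.1.2 lam)

/-- `I` is the identity endomorph `I_Λ` on `Λ`: underlying set `Λ⁰`,
`r = s = id`, and `φ(r(λ),λ) = (λ, s(λ))`. -/
def IsIdMorph {k : ℕ} {O P : Type} {Λ : KGraphStr k O P}
    (I : KMorph Λ Λ O) : Prop :=
  (∀ v, I.r v = v) ∧ (∀ v, I.s v = v) ∧
  (∀ v lam, I.s v = Λ.rng lam → I.φl v lam = lam ∧ I.φx v lam = Λ.src lam)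

/-- A morphism (degree-preserving functor) of k-graphs from `Γ` to `Λ`. -/
structure KGraphHom {k : ℕ} {OΓ PΓ OΛ PΛ : Type}
    (Γ : KGraphStr k OΓ PΓ) (Λ : KGraphStr k OΛ PΛ) where
  vmap : OΓ → OΛ
  pmap : PΓ → PΛ
  src_pmap : ∀ p, Λ.src (pmap p) = vmap (Γ.src p)
  rng_pmap : ∀ p, Λ.rng (pmap p) = vmap (Γ.rng p)
  d_pmap : ∀ p, Λ.d (pmap p) = Γ.d p
  ident_pmap : ∀ v, pmap (Γ.ident v) = Λ.ident (vmap v)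
  comp_pmap : ∀ p q, Γ.src p = Γ.rng q →
      pmap (Γ.comp p q) = Λ.comp (pmap p) (pmap q)

/-- `F : Γ → Λ` is a covering: a surjective k-graph morphism restricting to
bijections `vΓ → F(v)Λ` and `Γv → ΛF(v)` for every vertex `v`. -/
def IsCovering {k : ℕ} {OΓ PΓ OΛ PΛ : Type}
    {Γ : KGraphStr k OΓ PΓ} {Λ : KGraphStr k OΛ PΛ}
    (F : KGraphHom Γ Λ) : Prop :=
  Function.Surjective F.pmap ∧
  (∀ v : OΓ, Set.BijOn F.pmap {p | Γ.rng p = v} {q | Λ.rng q = F.vmap v}) ∧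
  (∀ v : OΓ, Set.BijOn F.pmap {p | Γ.src p = v} {q | Λ.src q = F.vmap v})

/-- `M` is the k-morph `X(F)` (also written `ₚX` for a covering `F = p`)
associated with a k-graph morphism `F : Γ → Λ`: underlying set `Γ⁰`,
`r = F` on vertices, `s = id`, and `φ(r(γ), γ) = (F(γ), s(γ))`. -/
def IsXalpha {k : ℕ} {OΓ PΓ OΛ PΛ : Type}
    {Γ : KGraphStr k OΓ PΓ} {Λ : KGraphStr k OΛ PΛ}
    (F : KGraphHom Γ Λ) (M : KMorph Λ Γ OΓ) : Prop :=
  (∀ v, M.r v = F.vmap v) ∧ (∀ v, M.s v = v) ∧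
  (∀ v γ, M.s v = Γ.rng γ → M.φl v γ = F.pmap γ ∧ M.φx v γ = Γ.src γ)

/-- An isomorphism of (higher-rank) graph structures. -/
structure GraphIso {k : ℕ} {O P O' P' : Type}
    (S : KGraphStr k O P) (S' : KGraphStr k O' P') where
  ev : O ≃ O'
  ep : P ≃ P'
  src_ep : ∀ p, S'.src (ep p) = ev (S.src p)
  rng_ep : ∀ p, S'.rng (ep p) = ev (S.rng p)
  d_ep : ∀ p, S'.d (ep p) = S.d p
  ident_ep : ∀ v, ep (S.ident v) = S'.ident (ev v)
  comp_ep : ∀ p q, S.src p = S.rng q → ep (S.comp p q) = S'.comp (ep p) (ep q)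

/-- A linking graph for a `(Λ,Γ)` k-morph `M`: a `(k+1)`-graph `S` together
with an `ι`-quasimorphism `i : Λ ⊔ Γ → S` (encoded by the four maps `ivΛ`,
`ivΓ`, `ipΛ`, `ipΓ`) inducing an isomorphism of `Λ ⊔ Γ` onto
`S^ι = {σ : d(σ) ∈ ι(ℕ^k)}`, such that each edge of degree `e_{k+1}` has
source in `i(Γ⁰)` and range in `i(Λ⁰)`, and such that the k-morph
`X(Λ,Γ,S,i)` of degree-`e_{k+1}` edges (with structure maps coming from the
factorisation property of `S`) is isomorphic to `M` via a bijection `ψ`. -/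
structure Linking {k : ℕ} {OΛ PΛ OΓ PΓ X : Type}
    (Λ : KGraphStr k OΛ PΛ) (Γ : KGraphStr k OΓ PΓ)
    (M : KMorph Λ Γ X) where
  Ob : Type
  Pa : Type
  S : KGraphStr (k+1) Ob Pa
  ivΛ : OΛ → Ob
  ivΓ : OΓ → Ob
  ipΛ : PΛ → Pa
  ipΓ : PΓ → Pa
  -- `i` is an `ι`-quasimorphism
  dΛ : ∀ p, S.d (ipΛ p) = Fin.snoc (Λ.d p) 0
  dΓ : ∀ p, S.d (ipΓ p) = Fin.snoc (Γ.d p) 0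
  srcΛ : ∀ p, S.src (ipΛ p) = ivΛ (Λ.src p)
  rngΛ : ∀ p, S.rng (ipΛ p) = ivΛ (Λ.rng p)
  srcΓ : ∀ p, S.src (ipΓ p) = ivΓ (Γ.src p)
  rngΓ : ∀ p, S.rng (ipΓ p) = ivΓ (Γ.rng p)
  identΛ : ∀ v, S.ident (ivΛ v) = ipΛ (Λ.ident v)
  identΓ : ∀ w, S.ident (ivΓ w) = ipΓ (Γ.ident w)
  compΛ : ∀ p q, Λ.src p = Λ.rng q → S.comp (ipΛ p) (ipΛ q) = ipΛ (Λ.comp p q)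
  compΓ : ∀ p q, Γ.src p = Γ.rng q → S.comp (ipΓ p) (ipΓ q) = ipΓ (Γ.comp p q)
  -- `i` induces an isomorphism of `Λ ⊔ Γ` onto `S^ι`
  inj : Function.Injective (Sum.elim ipΛ ipΓ : PΛ ⊕ PΓ → Pa)
  surjι : ∀ σ : Pa, S.d σ (Fin.last k) = 0 →
    (∃ p, σ = ipΛ p) ∨ (∃ q, σ = ipΓ q)
  -- edges of degree e_{k+1} run from `i(Γ⁰)` to `i(Λ⁰)`
  edge_src : ∀ σ : Pa, S.d σ = Fin.snoc (0 : Fin k → ℕ) 1 → ∃ w, S.src σ = ivΓ w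
  edge_rng : ∀ σ : Pa, S.d σ = Fin.snoc (0 : Fin k → ℕ) 1 → ∃ v, S.rng σ = ivΛ v
  -- the induced k-morph `X(Λ,Γ,S,i)` is isomorphic to `M` via `ψ`
  ψ : X ≃ {σ : Pa // S.d σ = Fin.snoc (0 : Fin k → ℕ) 1}
  ψ_rng : ∀ x, S.rng (ψ x).1 = ivΛ (M.r x)
  ψ_src : ∀ x, S.src (ψ x).1 = ivΓ (M.s x)
  ψ_φ : ∀ x γ, M.s x = Γ.rng γ →
    S.comp (ψ x).1 (ipΓ γ) = S.comp (ipΛ (M.φl x γ)) (ψ (M.φx x γ)).1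

/-- A higher-rank graph is row-finite if `vΛⁿ` is finite for every vertex `v`
and degree `n`. -/
def RowFinite {k : ℕ} {O P : Type} (S : KGraphStr k O P) : Prop :=
  ∀ (v : O) (n : Fin k → ℕ), {p : P | S.rng p = v ∧ S.d p = n}.Finite

/-- A higher-rank graph has no sources if `vΛⁿ ≠ ∅` for every vertex `v` and
degree `n`. -/
def NoSources {k : ℕ} {O P : Type} (S : KGraphStr k O P) : Prop :=
  ∀ (v : O) (n : Fin k → ℕ), ∃ p : P, S.rng p = v ∧ S.d p = n

/-- A higher-rank graph is locally convex if whenever `i < j`,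
`e ∈ Σ^{e_i}`, `f ∈ Σ^{e_j}` and `r(e) = r(f)`, there are edges
`e' ∈ s(e)Σ^{e_j}` and `f' ∈ s(f)Σ^{e_i}`. -/
def LocallyConvex {k : ℕ} {O P : Type} (S : KGraphStr k O P) : Prop :=
  ∀ (i j : Fin k), i < j → ∀ e f : P,
    S.d e = Pi.single i 1 → S.d f = Pi.single j 1 → S.rng e = S.rng f →
    (∃ e', S.d e' = Pi.single j 1 ∧ S.rng e' = S.src e) ∧
    (∃ f', S.d f' = Pi.single i 1 ∧ S.rng f' = S.src f)

lemma snoc_add' {k : ℕ} (m n : Fin k → ℕ) (a b : ℕ) :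
    (Fin.snoc m a + Fin.snoc n b : Fin (k+1) → ℕ) = Fin.snoc (m + n) (a + b) := by
  funext x
  refine Fin.lastCases ?_ (fun i => ?_) x <;>
    simp [Fin.snoc_last, Fin.snoc_castSucc]

lemma snoc_fst_eq' {k : ℕ} {m n : Fin k → ℕ} {a b : ℕ}
    (h : (Fin.snoc m a : Fin (k+1) → ℕ) = Fin.snoc n b) : m = n := by
  funext i
  have := congrFun h (Fin.castSucc i)
  simpa using this

lemma single_castSucc' {k : ℕ} (i : Fin k) :
    (Pi.single (Fin.castSucc i) 1 : Fin (k+1) → ℕ) = Fin.snoc (Pi.single i 1) 0 := by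
  funext x
  refine Fin.lastCases ?_ (fun j => ?_) x
  · simp [Pi.single_apply, ((Fin.castSucc_lt_last i).ne).symm]
  · simp [Pi.single_apply, Fin.castSucc_inj]

lemma single_last' {k : ℕ} :
    (Pi.single (Fin.last k) 1 : Fin (k+1) → ℕ) = Fin.snoc (0 : Fin k → ℕ) 1 := by
  funext x
  refine Fin.lastCases ?_ (fun j => ?_) x
  · simp
  · simp [Pi.single_apply, (Fin.castSucc_lt_last j).ne]

/-- if `Λ` and `Γ` are row-finite k-graphs with no sources, and
`X` is a `(Λ,Γ)` k-morph whose source map is surjective and whose range map is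
surjective and finite-to-one, then any linking graph for `X` is a row-finite,
locally convex `(k+1)`-graph. -/
theorem linking_rowFinite_locallyConvex {k : ℕ} {OΛ PΛ OΓ PΓ X : Type}
    {Λ : KGraphStr k OΛ PΛ} {Γ : KGraphStr k OΓ PΓ}
    (M : KMorph Λ Γ X)
    (hΛrf : RowFinite Λ) (hΓrf : RowFinite Γ)
    (hΛns : NoSources Λ) (hΓns : NoSources Γ)
    (hs : Function.Surjective M.s)
    (hr : Function.Surjective M.r)
    (hrfin : ∀ v : OΛ, {x : X | M.r x = v}.Finite)
    (L : Linking Λ Γ M) :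
    RowFinite L.S ∧ LocallyConvex L.S := by
  -- basic injectivity facts
  have ipΛ_inj : Function.Injective L.ipΛ := by
    intro p q h
    have := L.inj (a₁ := Sum.inl p) (a₂ := Sum.inl q) (by simpa using h)
    simpa using this
  have ipΓ_inj : Function.Injective L.ipΓ := by
    intro p q h
    have := L.inj (a₁ := Sum.inr p) (a₂ := Sum.inr q) (by simpa using h)
    simpa using this
  have ipΛΓ : ∀ p q, L.ipΛ p ≠ L.ipΓ q := by
    intro p q h
    have := L.inj (a₁ := Sum.inl p) (a₂ := Sum.inr q) (by simpa using h)
    simp at this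
  have ivΛ_inj : Function.Injective L.ivΛ := by
    intro v v' h
    have h1 : L.ipΛ (Λ.ident v) = L.ipΛ (Λ.ident v') := by
      rw [← L.identΛ, ← L.identΛ, h]
    have h2 := ipΛ_inj h1
    have := congrArg Λ.rng h2
    rwa [Λ.rng_ident, Λ.rng_ident] at this
  have ivΓ_inj : Function.Injective L.ivΓ := by
    intro v v' h
    have h1 : L.ipΓ (Γ.ident v) = L.ipΓ (Γ.ident v') := by
      rw [← L.identΓ, ← L.identΓ, h]
    have h2 := ipΓ_inj h1
    have := congrArg Γ.rng h2
    rwa [Γ.rng_ident, Γ.rng_ident] at this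
  have ivΛΓ : ∀ v w, L.ivΛ v ≠ L.ivΓ w := by
    intro v w h
    exact ipΛΓ (Λ.ident v) (Γ.ident w)
      (by rw [← L.identΛ, ← L.identΓ, h])
  -- finiteness of edge sets of degree e_{k+1}
  have edgefin : ∀ v : L.Ob,
      {σ : L.Pa | L.S.rng σ = v ∧ L.S.d σ = Fin.snoc (0 : Fin k → ℕ) 1}.Finite := by
    intro v
    have hfin : {x : X | L.ivΛ (M.r x) = v}.Finite := by
      rcases Set.eq_empty_or_nonempty {x : X | L.ivΛ (M.r x) = v} with h | ⟨x₀, hx₀⟩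
      · simp [h]
      · exact (hrfin (M.r x₀)).subset fun x hx => ivΛ_inj (hx.trans hx₀.symm)
    refine (hfin.image (fun x => (L.ψ x).1)).subset ?_
    rintro σ ⟨hrng, hd⟩
    refine ⟨L.ψ.symm ⟨σ, hd⟩, ?_, ?_⟩
    · have h1 := L.ψ_rng (L.ψ.symm ⟨σ, hd⟩)
      rw [Equiv.apply_symm_apply] at h1
      exact h1.symm.trans hrng
    · simp
  -- finiteness of sets of paths of ι-degree
  have ιfin : ∀ (m : Fin k → ℕ) (v : L.Ob),
      {σ : L.Pa | L.S.rng σ = v ∧ L.S.d σ = Fin.snoc m 0}.Finite := by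
    intro m v
    have hAΛ : {p : PΛ | L.ivΛ (Λ.rng p) = v ∧ Λ.d p = m}.Finite := by
      rcases Set.eq_empty_or_nonempty {p : PΛ | L.ivΛ (Λ.rng p) = v ∧ Λ.d p = m}
        with h | ⟨p₀, hp₀⟩
      · simp [h]
      · exact (hΛrf (Λ.rng p₀) m).subset
          fun p ⟨hv, hd⟩ => ⟨ivΛ_inj (hv.trans hp₀.1.symm), hd⟩
    have hAΓ : {p : PΓ | L.ivΓ (Γ.rng p) = v ∧ Γ.d p = m}.Finite := by
      rcases Set.eq_empty_or_nonempty {p : PΓ | L.ivΓ (Γ.rng p) = v ∧ Γ.d p = m}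
        with h | ⟨p₀, hp₀⟩
      · simp [h]
      · exact (hΓrf (Γ.rng p₀) m).subset
          fun p ⟨hv, hd⟩ => ⟨ivΓ_inj (hv.trans hp₀.1.symm), hd⟩
    refine ((hAΛ.image L.ipΛ).union (hAΓ.image L.ipΓ)).subset ?_
    rintro σ ⟨hrng, hd⟩
    have hlast : L.S.d σ (Fin.last k) = 0 := by rw [hd]; simp
    rcases L.surjι σ hlast with ⟨p, rfl⟩ | ⟨q, rfl⟩
    · left
      refine ⟨p, ⟨?_, ?_⟩, rfl⟩
      · rw [← L.rngΛ]; exact hrng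
      · exact snoc_fst_eq' ((L.dΛ p).symm.trans hd)
    · right
      refine ⟨q, ⟨?_, ?_⟩, rfl⟩
      · rw [← L.rngΓ]; exact hrng
      · exact snoc_fst_eq' ((L.dΓ q).symm.trans hd)
  -- the key finiteness claim, by induction on the last coordinate
  have key : ∀ (t : ℕ) (m : Fin k → ℕ) (v : L.Ob),
      {σ : L.Pa | L.S.rng σ = v ∧ L.S.d σ = Fin.snoc m t}.Finite := by
    intro t
    induction t with
    | zero => exact fun m v => ιfin m v
    | succ t IH =>
      intro m v
      have hE := edgefin v
      have hF : (⋃ e ∈ {σ : L.Pa | L.S.rng σ = v ∧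
            L.S.d σ = Fin.snoc (0 : Fin k → ℕ) 1},
          ({e} : Set L.Pa) ×ˢ {τ : L.Pa | L.S.rng τ = L.S.src e ∧
            L.S.d τ = Fin.snoc m t}).Finite :=
        hE.biUnion fun e _ => (Set.finite_singleton e).prod (IH m (L.S.src e))
    -- every σ of degree (m, t+1) factors as e ∘ τ
      refine (hF.image (fun p : L.Pa × L.Pa => L.S.comp p.1 p.2)).subset ?_
      rintro σ ⟨hrng, hd⟩
      have hdsum : L.S.d σ = Fin.snoc (0 : Fin k → ℕ) 1 + Fin.snoc m t := by
        rw [snoc_add', hd]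
        congr 1 <;> simp [Nat.add_comm]
      obtain ⟨⟨μ, ν⟩, ⟨hsr, hdμ, hdν, hc⟩, -⟩ := L.S.factor σ _ _ hdsum
      have hrμ : L.S.rng μ = v := by
        have := L.S.rng_comp μ ν hsr
        rw [hc] at this
        exact this.symm.trans hrng
      exact ⟨(μ, ν), Set.mem_biUnion ⟨hrμ, hdμ⟩ ⟨rfl, hsr.symm, hdν⟩, hc⟩
  constructor
  · -- row-finiteness
    intro v n
    have := key (n (Fin.last k)) (Fin.init n) v
    rwa [Fin.snoc_init_self] at this
  · -- local convexity
    intro i j hij e f hde hdf hrngef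
    have hine : i ≠ Fin.last k := by
      intro h
      exact absurd (h ▸ hij) (by simpa using (Fin.le_last j).not_gt)
    obtain ⟨i₀, rfl⟩ := Fin.exists_castSucc_eq.mpr hine
    have hdei : L.S.d e = Fin.snoc (Pi.single i₀ 1) 0 := by
      rw [hde, single_castSucc']
    have helast : L.S.d e (Fin.last k) = 0 := by rw [hdei]; simp
    by_cases hj : j = Fin.last k
    · subst hj
      -- f is a degree-e_{k+1} edge, i.e. f = ψ x
      have hdf' : L.S.d f = Fin.snoc (0 : Fin k → ℕ) 1 := by
        rw [hdf, single_last']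
      set x := L.ψ.symm ⟨f, hdf'⟩ with hx
      have hfx : (L.ψ x).1 = f := by rw [hx, Equiv.apply_symm_apply]
      have hsrcf : L.S.src f = L.ivΓ (M.s x) := by
        rw [← hfx]; exact L.ψ_src x
      have hrngf : L.S.rng f = L.ivΛ (M.r x) := by
        rw [← hfx]; exact L.ψ_rng x
      constructor
      · -- need e' of degree e_{k+1} into src e
        rcases L.surjι e helast with ⟨p, rfl⟩ | ⟨q, rfl⟩
        · obtain ⟨x', hx'⟩ := hr (Λ.src p)
          refine ⟨(L.ψ x').1, ?_, ?_⟩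
          · rw [single_last']; exact (L.ψ x').2
          · rw [L.ψ_rng, hx', L.srcΛ]
        · exact absurd ((L.rngΓ q ▸ hrngef).trans hrngf) (ivΛΓ _ _).symm
      · -- need f' of degree e_{i} into src f
        obtain ⟨γ, hγr, hγd⟩ := hΓns (M.s x) (Pi.single i₀ 1)
        refine ⟨L.ipΓ γ, ?_, ?_⟩
        · rw [L.dΓ, hγd, single_castSucc']
        · rw [L.rngΓ, hγr, hsrcf]
    · obtain ⟨j₀, rfl⟩ := Fin.exists_castSucc_eq.mpr hj
      have hdfj : L.S.d f = Fin.snoc (Pi.single j₀ 1) 0 := by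
        rw [hdf, single_castSucc']
      have hflast : L.S.d f (Fin.last k) = 0 := by rw [hdfj]; simp
      constructor
      · rcases L.surjι e helast with ⟨p, rfl⟩ | ⟨q, rfl⟩
        · obtain ⟨p', hp'r, hp'd⟩ := hΛns (Λ.src p) (Pi.single j₀ 1)
          refine ⟨L.ipΛ p', ?_, ?_⟩
          · rw [L.dΛ, hp'd, single_castSucc']
          · rw [L.rngΛ, hp'r, L.srcΛ]
        · obtain ⟨q', hq'r, hq'd⟩ := hΓns (Γ.src q) (Pi.single j₀ 1)
          refine ⟨L.ipΓ q', ?_, ?_⟩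
          · rw [L.dΓ, hq'd, single_castSucc']
          · rw [L.rngΓ, hq'r, L.srcΓ]
      · rcases L.surjι f hflast with ⟨p, rfl⟩ | ⟨q, rfl⟩
        · obtain ⟨p', hp'r, hp'd⟩ := hΛns (Λ.src p) (Pi.single i₀ 1)
          refine ⟨L.ipΛ p', ?_, ?_⟩
          · rw [L.dΛ, hp'd, single_castSucc']
          · rw [L.rngΛ, hp'r, L.srcΛ]
        · obtain ⟨q', hq'r, hq'd⟩ := hΓns (Γ.src q) (Pi.single i₀ 1)
          refine ⟨L.ipΓ q', ?_, ?_⟩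
          · rw [L.dΓ, hq'd, single_castSucc']
          · rw [L.rngΓ, hq'r, L.srcΓ]
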